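/- arXiv:0908.1836 — 4 statements merged into one kernel-verified Lean document; each statement's English description precedes it below -/
import Mathlib

section
/- Let L(β) = ‖y - Xβ‖₂² + λ₂‖β‖₂² + λ₁∑_j ŵ_j|β_j| with λ₂ > 0, λ₁ ≥ 0, ŵ_j ≥ 0, and let β̂_w minimize L, and let β̂₀ minimize the ridge objective ‖y - Xβ‖₂² + λ₂‖β‖₂². Then λ₁∑_j ŵ_j(|β̂₀_j| - |β̂_{w,j}|) ≥ (β̂_w - β̂₀)ᵀ(XᵀX + λ₂I)(β̂_w - β̂₀). -/
open Matrix

/-- Basic inequality comparing the weighted elastic-net minimizer with the ridge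
minimizer:
`λ₁ ∑ j, ŵ j (|β̂₀ j| - |β̂w j|) ≥ (β̂w - β̂₀)ᵀ (XᵀX + λ₂ I) (β̂w - β̂₀)`. -/
theorem stmt_3 {n p : ℕ} (y : Fin n → ℝ) (X : Matrix (Fin n) (Fin p) ℝ)
    (l2 l1 : ℝ) (hl2 : 0 < l2) (hl1 : 0 ≤ l1)
    (w : Fin p → ℝ) (hw : ∀ j, 0 ≤ w j)
    (bw b0 : Fin p → ℝ)
    (hbw : ∀ β : Fin p → ℝ,
      (∑ i, (y i - X.mulVec bw i) ^ 2) + l2 * ∑ j, (bw j) ^ 2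
          + l1 * ∑ j, w j * |bw j| ≤
        (∑ i, (y i - X.mulVec β i) ^ 2) + l2 * ∑ j, (β j) ^ 2
          + l1 * ∑ j, w j * |β j|)
    (hb0 : ∀ β : Fin p → ℝ,
      (∑ i, (y i - X.mulVec b0 i) ^ 2) + l2 * ∑ j, (b0 j) ^ 2 ≤
        (∑ i, (y i - X.mulVec β i) ^ 2) + l2 * ∑ j, (β j) ^ 2) :
    (bw - b0) ⬝ᵥ ((Xᵀ * X + l2 • (1 : Matrix (Fin p) (Fin p) ℝ)).mulVec (bw - b0)) ≤
      l1 * ∑ j, w j * (|b0 j| - |bw j|) := by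
  set d : Fin p → ℝ := bw - b0 with hd
  set L : ℝ := 2 * (∑ i, (y i - X.mulVec b0 i) * (-(X.mulVec d i)))
      + l2 * (2 * ∑ j, b0 j * d j) with hL
  set Q : ℝ := (∑ i, (X.mulVec d i)^2) + l2 * ∑ j, (d j)^2 with hQ
  -- expansion of the ridge objective along the line b0 + t • d
  have hexp : ∀ t : ℝ,
      (∑ i, (y i - X.mulVec (b0 + t • d) i)^2) + l2 * ∑ j, ((b0 + t • d) j)^2
        = ((∑ i, (y i - X.mulVec b0 i)^2) + l2 * ∑ j, (b0 j)^2) + t * L + t^2 * Q := by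
    intro t
    have h1 : ∀ i, y i - X.mulVec (b0 + t • d) i
        = (y i - X.mulVec b0 i) + t * (-(X.mulVec d i)) := by
      intro i
      simp [Matrix.mulVec_add, Matrix.mulVec_smul]
      ring
    have e1 : (∑ i, (y i - X.mulVec (b0 + t • d) i)^2)
        = (∑ i, (y i - X.mulVec b0 i)^2)
          + t * (2 * ∑ i, (y i - X.mulVec b0 i) * (-(X.mulVec d i)))
          + t^2 * ∑ i, (X.mulVec d i)^2 := by
      have : ∀ i, (y i - X.mulVec (b0 + t • d) i)^2
          = (y i - X.mulVec b0 i)^2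
            + t * (2 * ((y i - X.mulVec b0 i) * (-(X.mulVec d i))))
            + t^2 * (X.mulVec d i)^2 := by
        intro i; rw [h1 i]; ring
      simp_rw [this, Finset.sum_add_distrib, ← Finset.mul_sum]
    have e2 : (∑ j, ((b0 + t • d) j)^2)
        = (∑ j, (b0 j)^2) + t * (2 * ∑ j, b0 j * d j) + t^2 * ∑ j, (d j)^2 := by
      have : ∀ j : Fin p, ((b0 + t • d) j)^2
          = (b0 j)^2 + t * (2 * (b0 j * d j)) + t^2 * (d j)^2 := by
        intro j
        show (b0 j + t * d j)^2 = _
        ring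
      simp_rw [this, Finset.sum_add_distrib, ← Finset.mul_sum]
    rw [e1, e2, hL, hQ]; ring
  have hQ0 : 0 ≤ Q := by
    apply add_nonneg
    · exact Finset.sum_nonneg fun i _ => sq_nonneg _
    · exact mul_nonneg hl2.le (Finset.sum_nonneg fun j _ => sq_nonneg _)
  -- key inequality from minimality of b0
  have key : ∀ t : ℝ, 0 ≤ t * L + t^2 * Q := by
    intro t
    have := hb0 (b0 + t • d)
    rw [hexp t] at this
    linarith
  have hL0 : 0 ≤ L := by
    by_contra h
    push_neg at h
    have h2Q : (0:ℝ) < 2 * Q + 1 := by linarith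
    have ht : (0:ℝ) < -L / (2 * Q + 1) := div_pos (by linarith) h2Q
    have hk := key (-L / (2 * Q + 1))
    have hk2 : 0 ≤ L + (-L / (2 * Q + 1)) * Q := by
      have hfac : (-L / (2 * Q + 1)) * L + (-L / (2 * Q + 1))^2 * Q
          = (-L / (2 * Q + 1)) * (L + (-L / (2 * Q + 1)) * Q) := by ring
      rw [hfac] at hk
      exact (mul_nonneg_iff_of_pos_left ht).mp hk
    have hk3 : 0 ≤ L * (Q + 1) := by
      have hne : (2 * Q + 1) ≠ 0 := ne_of_gt h2Q
      have := mul_nonneg hk2 h2Q.le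
      have heq : (L + (-L / (2 * Q + 1)) * Q) * (2 * Q + 1) = L * (Q + 1) := by
        field_simp
        ring
      rwa [heq] at this
    nlinarith
  -- from minimality of bw, at β = b0
  have hw1 := hbw b0
  have hbw_exp : (∑ i, (y i - X.mulVec bw i)^2) + l2 * ∑ j, (bw j)^2
      = ((∑ i, (y i - X.mulVec b0 i)^2) + l2 * ∑ j, (b0 j)^2) + 1 * L + 1^2 * Q := by
    have := hexp 1
    have hb : b0 + (1:ℝ) • d = bw := by rw [hd]; simp
    rwa [hb] at this
  -- goal LHS equals Q
  have hgoal : d ⬝ᵥ ((Xᵀ * X + l2 • (1 : Matrix (Fin p) (Fin p) ℝ)).mulVec d) = Q := by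
    have h1 : d ⬝ᵥ (Xᵀ * X).mulVec d = ∑ i, (X.mulVec d i)^2 := by
      rw [← Matrix.mulVec_mulVec, Matrix.dotProduct_mulVec, Matrix.vecMul_transpose]
      simp [dotProduct, sq]
    have h2 : d ⬝ᵥ (l2 • (1 : Matrix (Fin p) (Fin p) ℝ)).mulVec d = l2 * ∑ j, (d j)^2 := by
      rw [Matrix.smul_mulVec, Matrix.one_mulVec]
      simp [dotProduct, sq, Finset.mul_sum]
      apply Finset.sum_congr rfl
      intro j _; ring
    rw [Matrix.add_mulVec, dotProduct_add, h1, h2, hQ]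
  rw [hgoal]
  have hsum : l1 * ∑ j, w j * (|b0 j| - |bw j|)
      = l1 * ∑ j, w j * |b0 j| - l1 * ∑ j, w j * |bw j| := by
    rw [← mul_sub, ← Finset.sum_sub_distrib]
    congr 1; apply Finset.sum_congr rfl; intro j _; ring
  rw [hsum]
  nlinarith [hbw_exp, hw1, hL0]
end

section
/- With β̂_w the minimizer of the adaptively weighted elastic-net objective ‖y - Xβ‖₂² + λ₂‖β‖₂² + λ₁∑_j ŵ_j|β_j| and β̂₀ the minimizer of the ridge objective ‖y - Xβ‖₂² + λ₂‖β‖₂², one has ‖β̂_w - β̂₀‖₂ ≤ λ₁ sqrt(∑_j ŵ_j²) / (λ_min(XᵀX) + λ₂). -/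
/-!
Write `Δ = β̂w - β̂₀`. Since `β̂₀` minimizes the quadratic ridge loss, its first-order term
vanishes, so the ridge loss at `β̂w = β̂₀ + Δ` exceeds that at `β̂₀` by exactly
`‖XΔ‖² + λ₂‖Δ‖² ≥ (λ_min(XᵀX) + λ₂)‖Δ‖²`. Comparing the elastic-net objective at `β̂w` and `β̂₀`
bounds the same excess by `λ₁ ∑ ŵ_j (|β̂₀_j| - |β̂w_j|) ≤ λ₁ ‖ŵ‖ ‖Δ‖` (Cauchy–Schwarz), and
dividing by `‖Δ‖` gives the claim.
-/

open Matrix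

theorem eq_zero_of_forall_mul_add_sq_mul_nonneg {L Q : ℝ} (h : ∀ t : ℝ, 0 ≤ t * L + t ^ 2 * Q) :
    L = 0 := by
  have hQ : 0 ≤ Q := by linarith [h 1, h (-1)]
  have hQ1 : Q + 1 ≠ 0 := by positivity
  have key := h (-L / (Q + 1))
  rw [show -L / (Q + 1) * L + (-L / (Q + 1)) ^ 2 * Q = -(L / (Q + 1)) ^ 2 by
    field_simp; ring] at key
  have : (L / (Q + 1)) ^ 2 = 0 := le_antisymm (neg_nonneg.1 key) (sq_nonneg _)
  simpa [hQ1] using this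

theorem le_div_of_mul_sq_le_mul {c K s : ℝ} (hc : 0 < c) (hK : 0 ≤ K) (hs : 0 ≤ s)
    (h : c * s ^ 2 ≤ K * s) : s ≤ K / c := by
  rw [le_div_iff₀ hc]
  rcases hs.eq_or_lt with rfl | hs
  · simpa using hK
  · nlinarith

section Finset

variable {ι : Type*}

theorem Finset.sum_sq_add_mul (s : Finset ι) (a d : ι → ℝ) (t : ℝ) :
    ∑ i ∈ s, (a i + t * d i) ^ 2
      = ∑ i ∈ s, a i ^ 2 + 2 * t * ∑ i ∈ s, a i * d i + t ^ 2 * ∑ i ∈ s, d i ^ 2 := by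
  simp only [Finset.mul_sum, ← Finset.sum_add_distrib]
  exact Finset.sum_congr rfl fun _ _ => by ring

theorem Finset.sum_mul_abs_sub_abs_le_sqrt_mul_sqrt (s : Finset ι) (w a b : ι → ℝ) :
    ∑ i ∈ s, w i * (|a i| - |b i|) ≤ √(∑ i ∈ s, w i ^ 2) * √(∑ i ∈ s, (a i - b i) ^ 2) := by
  refine (Real.sum_mul_le_sqrt_mul_sqrt s w _).trans ?_
  gcongr √?_ * √(∑ i ∈ s, ?_)
  exact sq_le_sq.2 (abs_abs_sub_abs_le_abs_sub _ _)

end Finset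

open scoped MatrixOrder in
theorem Matrix.IsHermitian.iInf_eigenvalues_mul_dotProduct_self_le {n : Type*} [Fintype n]
    [DecidableEq n] {A : Matrix n n ℝ} (hA : A.IsHermitian) (v : n → ℝ) :
    (⨅ i, hA.eigenvalues i) * (v ⬝ᵥ v) ≤ v ⬝ᵥ (A *ᵥ v) := by
  have hle : algebraMap ℝ _ (⨅ i, hA.eigenvalues i) ≤ A := by
    refine (algebraMap_le_iff_le_spectrum (ha := hA.isSelfAdjoint)).2 ?_
    rw [hA.spectrum_real_eq_range_eigenvalues]
    rintro _ ⟨i, rfl⟩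
    exact ciInf_le (Set.finite_range _).bddBelow i
  simpa [sub_mulVec, dotProduct_sub, Algebra.algebraMap_eq_smul_one, smul_mulVec] using
    (le_iff.1 hle).dotProduct_mulVec_nonneg v

section Ridge

variable {m k : Type*} [Fintype m] [Fintype k]

def ridgeLoss (X : Matrix m k ℝ) (y : m → ℝ) (l2 : ℝ) (β : k → ℝ) : ℝ :=
  ∑ i, (y i - (X *ᵥ β) i) ^ 2 + l2 * ∑ j, β j ^ 2

theorem ridgeLoss_add_smul (X : Matrix m k ℝ) (y : m → ℝ) (l2 : ℝ) (b d : k → ℝ) (t : ℝ) :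
    ridgeLoss X y l2 (b + t • d) = ridgeLoss X y l2 b
      + t * (2 * (l2 * ∑ j, b j * d j - ∑ i, (y i - (X *ᵥ b) i) * (X *ᵥ d) i))
      + t ^ 2 * (∑ i, (X *ᵥ d) i ^ 2 + l2 * ∑ j, d j ^ 2) := by
  have hres i : y i - (X *ᵥ (b + t • d)) i = (y i - (X *ᵥ b) i) + t * -(X *ᵥ d) i := by
    simp only [mulVec_add, mulVec_smul, Pi.add_apply, Pi.smul_apply, smul_eq_mul]
    ring
  simp only [ridgeLoss, hres, Finset.sum_sq_add_mul, Pi.add_apply, Pi.smul_apply, smul_eq_mul]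
  simp only [mul_neg, Finset.sum_neg_distrib, neg_sq]
  ring

theorem ridgeLoss_add_of_forall_le {X : Matrix m k ℝ} {y : m → ℝ} {l2 : ℝ} {b : k → ℝ}
    (hb : ∀ β, ridgeLoss X y l2 b ≤ ridgeLoss X y l2 β) (d : k → ℝ) :
    ridgeLoss X y l2 (b + d)
      = ridgeLoss X y l2 b + (∑ i, (X *ᵥ d) i ^ 2 + l2 * ∑ j, d j ^ 2) := by
  have hL := eq_zero_of_forall_mul_add_sq_mul_nonneg fun t => by
    have := hb (b + t • d)
    rw [ridgeLoss_add_smul, add_assoc] at this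
    exact le_add_iff_nonneg_right _ |>.1 this
  simpa [hL] using ridgeLoss_add_smul X y l2 b d 1

theorem iInf_eigenvalues_add_mul_sum_sq_le [DecidableEq k] (X : Matrix m k ℝ)
    (hH : (Xᵀ * X).IsHermitian) (l2 : ℝ) (v : k → ℝ) :
    ((⨅ i, hH.eigenvalues i) + l2) * ∑ j, v j ^ 2
      ≤ ∑ i, (X *ᵥ v) i ^ 2 + l2 * ∑ j, v j ^ 2 := by
  have hsq : ∑ i, (X *ᵥ v) i ^ 2 = v ⬝ᵥ ((Xᵀ * X) *ᵥ v) := by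
    rw [← mulVec_mulVec, dotProduct_mulVec, vecMul_transpose]
    simp only [dotProduct, sq]
  have hnorm : ∑ j, v j ^ 2 = v ⬝ᵥ v := by simp only [dotProduct, sq]
  have := hH.iInf_eigenvalues_mul_dotProduct_self_le v
  rw [hsq, hnorm]
  linarith

end Ridge

theorem stmt_4_general {n p : ℕ} (y : Fin n → ℝ) (X : Matrix (Fin n) (Fin p) ℝ)
    (hH : (Xᵀ * X).IsHermitian)
    (l2 l1 : ℝ) (hl2 : 0 < l2) (hl1 : 0 ≤ l1)
    (w : Fin p → ℝ)
    (bw b0 : Fin p → ℝ)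
    (hbw : ∀ β : Fin p → ℝ,
      (∑ i, (y i - X.mulVec bw i) ^ 2) + l2 * ∑ j, (bw j) ^ 2
          + l1 * ∑ j, w j * |bw j| ≤
        (∑ i, (y i - X.mulVec β i) ^ 2) + l2 * ∑ j, (β j) ^ 2
          + l1 * ∑ j, w j * |β j|)
    (hb0 : ∀ β : Fin p → ℝ,
      (∑ i, (y i - X.mulVec b0 i) ^ 2) + l2 * ∑ j, (b0 j) ^ 2 ≤
        (∑ i, (y i - X.mulVec β i) ^ 2) + l2 * ∑ j, (β j) ^ 2) :
    Real.sqrt (∑ j, (bw j - b0 j) ^ 2) ≤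
      l1 * Real.sqrt (∑ j, (w j) ^ 2) / ((⨅ i, hH.eigenvalues i) + l2) := by
  have hexcess := ridgeLoss_add_of_forall_le hb0 (bw - b0)
  rw [add_sub_cancel] at hexcess
  unfold ridgeLoss at hexcess
  have hupper : ∑ i, (X *ᵥ (bw - b0)) i ^ 2 + l2 * ∑ j, (bw - b0) j ^ 2
      ≤ l1 * ∑ j, w j * (|b0 j| - |bw j|) := by
    simp only [mul_sub, Finset.sum_sub_distrib]
    linarith [hbw b0]
  have hmin : 0 ≤ ⨅ i, hH.eigenvalues i := Real.iInf_nonneg fun i => by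
    simpa using (posSemidef_conjTranspose_mul_self X).eigenvalues_nonneg i
  refine le_div_of_mul_sq_le_mul (by positivity) (by positivity) (Real.sqrt_nonneg _) ?_
  rw [Real.sq_sqrt (by positivity)]
  calc ((⨅ i, hH.eigenvalues i) + l2) * ∑ j, (bw j - b0 j) ^ 2
      ≤ ∑ i, (X *ᵥ (bw - b0)) i ^ 2 + l2 * ∑ j, (bw - b0) j ^ 2 :=
        iInf_eigenvalues_add_mul_sum_sq_le X hH l2 (bw - b0)
    _ ≤ l1 * ∑ j, w j * (|b0 j| - |bw j|) := hupper
    _ ≤ l1 * (√(∑ j, w j ^ 2) * √(∑ j, (b0 j - bw j) ^ 2)) := by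
        gcongr
        exact Finset.sum_mul_abs_sub_abs_le_sqrt_mul_sqrt _ w b0 bw
    _ = l1 * √(∑ j, w j ^ 2) * √(∑ j, (bw j - b0 j) ^ 2) := by
        simp only [sub_sq_comm (b0 _), mul_assoc]

/-- `‖β̂w - β̂₀‖₂ ≤ λ₁ sqrt(∑ ŵ_j²) / (λ_min(XᵀX) + λ₂)`, where `β̂w` minimizes the
adaptively weighted elastic-net objective and `β̂₀` the ridge objective. -/
theorem stmt_4 {n p : ℕ} (hp : 0 < p) (y : Fin n → ℝ) (X : Matrix (Fin n) (Fin p) ℝ)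
    (hH : (Xᵀ * X).IsHermitian)
    (l2 l1 : ℝ) (hl2 : 0 < l2) (hl1 : 0 ≤ l1)
    (w : Fin p → ℝ) (hw : ∀ j, 0 ≤ w j)
    (bw b0 : Fin p → ℝ)
    (hbw : ∀ β : Fin p → ℝ,
      (∑ i, (y i - X.mulVec bw i) ^ 2) + l2 * ∑ j, (bw j) ^ 2
          + l1 * ∑ j, w j * |bw j| ≤
        (∑ i, (y i - X.mulVec β i) ^ 2) + l2 * ∑ j, (β j) ^ 2
          + l1 * ∑ j, w j * |β j|)
    (hb0 : ∀ β : Fin p → ℝ,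
      (∑ i, (y i - X.mulVec b0 i) ^ 2) + l2 * ∑ j, (b0 j) ^ 2 ≤
        (∑ i, (y i - X.mulVec β i) ^ 2) + l2 * ∑ j, (β j) ^ 2) :
    Real.sqrt (∑ j, (bw j - b0 j) ^ 2) ≤
      l1 * Real.sqrt (∑ j, (w j) ^ 2) / ((⨅ i, hH.eigenvalues i) + l2) :=
  stmt_4_general y X hH l2 l1 hl2 hl1 w bw b0 hbw hb0
end

section
/- (Theorem 3.1, nonasymptotic risk bound) In the linear model y = Xβ* + ε with E[ε] = 0 and Cov(ε) = σ²I, assume bn ≤ λ_min(XᵀX) ≤ λ_max(XᵀX) ≤ Bn for constants 0 < b ≤ B. Then the weighted elastic-net estimator β̂_w(λ₂, λ₁) = argmin_β ‖y - Xβ‖₂² + λ₂‖β‖₂² + λ₁∑_j ŵ_j|β_j| satisfies E‖β̂_w(λ₂, λ₁) - β*‖₂² ≤ 4(λ₂²‖β*‖₂² + Bpnσ² + λ₁²E[∑_j ŵ_j²]) / (bn + λ₂)². -/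
/-!
Write `F` for the objective and `d = β̂ - β*`. The penalty is convex, so comparing `F` at `β̂`
with its values on the segment towards `β*` and letting the step tend to `0` shows that at the
minimizer `F` grows at least like its quadratic part: `F(β*) - F(β̂) ≥ ‖X d‖² + λ₂‖d‖²`.
Expanding the left side with `y = Xβ* + ε`, bounding the cross terms by Cauchy–Schwarz, the
penalty difference by `λ₁‖ŵ‖‖d‖`, and `‖X d‖²` from below by `bn‖d‖²`, gives
`(bn + λ₂)‖d‖ ≤ ‖Xᵀε‖ + λ₂‖β*‖ + λ₁‖ŵ‖/2`. Squaring with `(a+b+c)² ≤ 3(a²+b²+c²)` and taking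
expectations, where `E‖Xᵀε‖² = σ² tr(XᵀX) ≤ σ² p B n`, yields the bound.
-/

open Matrix MeasureTheory

open Filter Topology Set RealInnerProductSpace

theorem nonneg_of_forall_mul_add_sq_mul_nonneg {L Q : ℝ}
    (h : ∀ t, 0 < t → t ≤ 1 → 0 ≤ t * L + t ^ 2 * Q) : 0 ≤ L := by
  have hlim : Tendsto (fun t => L + t * Q) (𝓝[>] 0) (𝓝 L) := by
    have : Continuous fun t : ℝ => L + t * Q := by fun_prop
    simpa using (this.tendsto 0).mono_left nhdsWithin_le_nhds
  refine ge_of_tendsto hlim ?_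
  filter_upwards [Ioc_mem_nhdsGT one_pos] with t ht
  have := h t ht.1 ht.2
  rw [show t * L + t ^ 2 * Q = t * (L + t * Q) by ring] at this
  exact (mul_nonneg_iff_of_pos_left ht.1).mp this

theorem sq_mul_sq_le_of_mul_sq_le {a s d : ℝ} (ha : 0 ≤ a) (hd : 0 ≤ d)
    (h : a * d ^ 2 ≤ s * d) : a ^ 2 * d ^ 2 ≤ s ^ 2 := by
  rcases hd.eq_or_lt with rfl | hd
  · simpa using sq_nonneg s
  · have had : a * d ≤ s := le_of_mul_le_mul_right (by linarith) hd
    rw [← mul_pow]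
    exact pow_le_pow_left₀ (by positivity) had 2

theorem add_add_sq_le_three_mul (a b c : ℝ) : (a + b + c) ^ 2 ≤ 3 * (a ^ 2 + b ^ 2 + c ^ 2) := by
  nlinarith [sq_nonneg (a - b), sq_nonneg (a - c), sq_nonneg (b - c)]

section PenalizedLeastSquares

variable {E F : Type*} [NormedAddCommGroup E] [InnerProductSpace ℝ E]
  [NormedAddCommGroup F] [InnerProductSpace ℝ F]

noncomputable def penalizedLeastSquares (T : E →ₗ[ℝ] F) (y : F) (ρ : ℝ) (g : E → ℝ) (β : E) :
    ℝ :=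
  ‖y - T β‖ ^ 2 + ρ * ‖β‖ ^ 2 + g β

theorem norm_sub_apply_add_smul_sq (T : E →ₗ[ℝ] F) (y : F) (ρ : ℝ) (m v : E) (t : ℝ) :
    ‖y - T (m + t • v)‖ ^ 2 + ρ * ‖m + t • v‖ ^ 2 =
      ‖y - T m‖ ^ 2 + ρ * ‖m‖ ^ 2 + t * (2 * ρ * ⟪m, v⟫ - 2 * ⟪y - T m, T v⟫)
        + t ^ 2 * (‖T v‖ ^ 2 + ρ * ‖v‖ ^ 2) := by
  rw [map_add, map_smul, ← sub_sub, norm_sub_sq_real, norm_add_sq_real, inner_smul_right,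
    inner_smul_right, norm_smul, norm_smul, Real.norm_eq_abs, mul_pow, mul_pow, sq_abs]
  ring

theorem norm_apply_sq_add_le_penalizedLeastSquares_sub {T : E →ₗ[ℝ] F} {y : F} {ρ : ℝ}
    {g : E → ℝ} (hg : ConvexOn ℝ univ g) {m : E}
    (hm : ∀ β, penalizedLeastSquares T y ρ g m ≤ penalizedLeastSquares T y ρ g β) (x : E) :
    ‖T (x - m)‖ ^ 2 + ρ * ‖x - m‖ ^ 2 ≤
      penalizedLeastSquares T y ρ g x - penalizedLeastSquares T y ρ g m := by
  set v := x - m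
  have hslope : 0 ≤ 2 * ρ * ⟪m, v⟫ - 2 * ⟪y - T m, T v⟫ + (g x - g m) := by
    refine nonneg_of_forall_mul_add_sq_mul_nonneg (Q := ‖T v‖ ^ 2 + ρ * ‖v‖ ^ 2)
      fun t ht0 ht1 => ?_
    have hconv : g (m + t • v) ≤ (1 - t) * g m + t * g x := by
      rw [show m + t • v = (1 - t) • m + t • x by simp only [v]; module]
      exact hg.2 (mem_univ _) (mem_univ _) (by linarith) ht0.le (by ring)
    have := hm (m + t • v)
    rw [penalizedLeastSquares, penalizedLeastSquares, norm_sub_apply_add_smul_sq] at this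
    linarith
  have := norm_sub_apply_add_smul_sq T y ρ m v 1
  rw [one_smul, add_sub_cancel] at this
  unfold penalizedLeastSquares
  linarith

theorem mul_norm_sub_sq_le_of_minimizer [FiniteDimensional ℝ E] [FiniteDimensional ℝ F]
    {T : E →ₗ[ℝ] F} {K ρ G : ℝ} (hK : ∀ v, K * ‖v‖ ^ 2 ≤ ‖T v‖ ^ 2) (hρ : 0 ≤ ρ)
    {g : E → ℝ} (hg : ConvexOn ℝ univ g) (hG : ∀ u v, g u - g v ≤ G * ‖u - v‖)
    {x : E} {e : F} {m : E}
    (hm : ∀ β, penalizedLeastSquares T (T x + e) ρ g m ≤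
      penalizedLeastSquares T (T x + e) ρ g β) :
    (K + ρ) * ‖m - x‖ ^ 2 ≤ (‖T.adjoint e‖ + ρ * ‖x‖ + G / 2) * ‖m - x‖ := by
  set d := m - x
  have hgrowth := norm_apply_sq_add_le_penalizedLeastSquares_sub hg hm x
  rw [← neg_sub m x, map_neg, norm_neg, norm_neg] at hgrowth
  have hJx : penalizedLeastSquares T (T x + e) ρ g x = ‖e‖ ^ 2 + ρ * ‖x‖ ^ 2 + g x := by
    simp [penalizedLeastSquares]
  have hJm : penalizedLeastSquares T (T x + e) ρ g m =
      ‖e‖ ^ 2 - 2 * ⟪e, T d⟫ + ‖T d‖ ^ 2 + ρ * (‖x‖ ^ 2 + 2 * ⟪x, d⟫ + ‖d‖ ^ 2) + g m := by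
    rw [penalizedLeastSquares, ← norm_sub_sq_real, ← norm_add_sq_real, add_sub_cancel, map_sub]
    congr 4
    abel
  have hcross : ⟪e, T d⟫ ≤ ‖T.adjoint e‖ * ‖d‖ := by
    rw [← LinearMap.adjoint_inner_left]
    exact real_inner_le_norm _ _
  have hshift : -⟪x, d⟫ ≤ ‖x‖ * ‖d‖ := (neg_le_abs _).trans (abs_real_inner_le_norm x d)
  have hpen : g x - g m ≤ G * ‖d‖ := by
    rw [← norm_neg, neg_sub]
    exact hG x m
  -- `hgrowth`, `hJx`, `hJm`: `2 (‖T d‖² + ρ‖d‖²) ≤ 2⟪e, T d⟫ - 2ρ⟪x, d⟫ + g x - g m`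
  nlinarith [hK d, mul_le_mul_of_nonneg_left hshift hρ]

end PenalizedLeastSquares

section WeightedL1

variable {ι : Type*} [Fintype ι]

noncomputable def weightedL1 (w : ι → ℝ) (β : EuclideanSpace ℝ ι) : ℝ := ∑ j, w j * |β j|

theorem convexOn_weightedL1 {w : ι → ℝ} (hw : ∀ j, 0 ≤ w j) :
    ConvexOn ℝ univ (weightedL1 w) := by
  refine ⟨convex_univ, fun u _ v _ a b ha hb _ => ?_⟩
  simp only [weightedL1, smul_eq_mul, Finset.mul_sum, ← Finset.sum_add_distrib]
  refine Finset.sum_le_sum fun j _ => ?_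
  have := abs_add_le (a * u j) (b * v j)
  rw [abs_mul, abs_mul, abs_of_nonneg ha, abs_of_nonneg hb] at this
  simp only [PiLp.add_apply, PiLp.smul_apply, smul_eq_mul]
  nlinarith [hw j]

theorem weightedL1_sub_le {w : ι → ℝ} (hw : ∀ j, 0 ≤ w j) (u v : EuclideanSpace ℝ ι) :
    weightedL1 w u - weightedL1 w v ≤ √(∑ j, w j ^ 2) * ‖u - v‖ := by
  calc weightedL1 w u - weightedL1 w v ≤ ∑ j, w j * |u j - v j| := by
        rw [weightedL1, weightedL1, ← Finset.sum_sub_distrib]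
        refine Finset.sum_le_sum fun j _ => ?_
        rw [← mul_sub]
        exact mul_le_mul_of_nonneg_left (abs_sub_abs_le_abs_sub _ _) (hw j)
    _ ≤ √(∑ j, w j ^ 2) * √(∑ j, |u j - v j| ^ 2) := Real.sum_mul_le_sqrt_mul_sqrt _ _ _
    _ = √(∑ j, w j ^ 2) * ‖u - v‖ := by simp [EuclideanSpace.norm_eq, sq_abs]

end WeightedL1

open scoped MatrixOrder ComplexOrder in
theorem Matrix.IsHermitian.posSemidef_sub_algebraMap {𝕜 n : Type*} [RCLike 𝕜] [Fintype n]
    [DecidableEq n] {A : Matrix n n 𝕜} (hA : A.IsHermitian) {c : ℝ}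
    (hc : ∀ i, c ≤ hA.eigenvalues i) : (A - algebraMap ℝ (Matrix n n 𝕜) c).PosSemidef := by
  rw [← Matrix.le_iff, algebraMap_le_iff_le_spectrum (a := A) hA.isSelfAdjoint,
    hA.spectrum_real_eq_range_eigenvalues]
  rintro _ ⟨i, rfl⟩
  exact hc i

theorem mul_norm_sq_le_norm_toEuclideanLin_sq {m n : Type*} [Fintype m] [Fintype n]
    [DecidableEq n] (X : Matrix m n ℝ) (hH : (Xᵀ * X).IsHermitian) {c : ℝ}
    (hc : ∀ i, c ≤ hH.eigenvalues i) (v : EuclideanSpace ℝ n) :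
    c * ‖v‖ ^ 2 ≤ ‖toEuclideanLin X v‖ ^ 2 := by
  have := (hH.posSemidef_sub_algebraMap hc).dotProduct_mulVec_nonneg (WithLp.ofLp v)
  rw [← real_inner_self_eq_norm_sq, ← real_inner_self_eq_norm_sq]
  simp only [EuclideanSpace.inner_eq_star_dotProduct, star_trivial] at *
  rwa [Algebra.algebraMap_eq_smul_one, sub_mulVec, smul_mulVec, one_mulVec, dotProduct_sub,
    dotProduct_smul, ← mulVec_mulVec, dotProduct_mulVec, vecMul_transpose, smul_eq_mul,
    sub_nonneg] at this

theorem sum_sum_sq_le_of_eigenvalues_le {m n : Type*} [Fintype m] [Fintype n] [DecidableEq n]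
    (X : Matrix m n ℝ) (hH : (Xᵀ * X).IsHermitian) {c : ℝ} (hc : ∀ i, hH.eigenvalues i ≤ c) :
    ∑ j, ∑ i, Xᵀ j i ^ 2 ≤ Fintype.card n * c := by
  have htrace : ∑ j, ∑ i, Xᵀ j i ^ 2 = (Xᵀ * X).trace := by simp [trace, mul_apply, sq]
  rw [htrace, hH.trace_eq_sum_eigenvalues]
  simpa using Finset.sum_le_sum fun i (_ : i ∈ Finset.univ) => hc i

section Noise

variable {Ω ι κ : Type*} [MeasurableSpace Ω] {μ : Measure Ω} [Fintype ι] [Fintype κ]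
  {e : Ω → κ → ℝ}

theorem sum_mulVec_sq_eq (A : Matrix ι κ ℝ) (v : κ → ℝ) :
    ∑ j, (A *ᵥ v) j ^ 2 = ∑ j, ∑ i, ∑ k, A j i * A j k * (v i * v k) := by
  simp only [mulVec, dotProduct, sq, Finset.sum_mul_sum]
  exact Fintype.sum_congr _ _ fun j => Fintype.sum_congr _ _ fun i =>
    Fintype.sum_congr _ _ fun k => by ring

theorem integrable_sum_mulVec_sq (A : Matrix ι κ ℝ)
    (hint : ∀ i k, Integrable (fun ω => e ω i * e ω k) μ) :
    Integrable (fun ω => ∑ j, (A *ᵥ e ω) j ^ 2) μ := by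
  simp only [sum_mulVec_sq_eq]
  exact integrable_finsetSum _ fun j _ => integrable_finsetSum _ fun i _ =>
    integrable_finsetSum _ fun k _ => (hint i k).const_mul _

theorem integral_sum_mulVec_sq [DecidableEq κ] (A : Matrix ι κ ℝ) {σ : ℝ}
    (hint : ∀ i k, Integrable (fun ω => e ω i * e ω k) μ)
    (hcov : ∀ i k, ∫ ω, e ω i * e ω k ∂μ = if i = k then σ ^ 2 else 0) :
    ∫ ω, ∑ j, (A *ᵥ e ω) j ^ 2 ∂μ = σ ^ 2 * ∑ j, ∑ i, A j i ^ 2 := by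
  have hterm : ∀ j i k, Integrable (fun ω => A j i * A j k * (e ω i * e ω k)) μ :=
    fun j i k => (hint i k).const_mul _
  simp only [sum_mulVec_sq_eq]
  rw [integral_finsetSum _ fun j _ => integrable_finsetSum _ fun i _ =>
    integrable_finsetSum _ fun k _ => hterm j i k]
  simp_rw [integral_finsetSum _ fun i _ => integrable_finsetSum _ fun k _ => hterm _ i k,
    integral_finsetSum _ fun k _ => hterm _ _ k, integral_const_mul, hcov]
  simp [Finset.mul_sum, sq, mul_comm]

theorem integral_sum_transpose_mulVec_sq_le [DecidableEq ι] [DecidableEq κ]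
    (X : Matrix κ ι ℝ) (hH : (Xᵀ * X).IsHermitian) {c : ℝ} (hc : ∀ i, hH.eigenvalues i ≤ c)
    {σ : ℝ} (hint : ∀ i k, Integrable (fun ω => e ω i * e ω k) μ)
    (hcov : ∀ i k, ∫ ω, e ω i * e ω k ∂μ = if i = k then σ ^ 2 else 0) :
    ∫ ω, ∑ j, (Xᵀ *ᵥ e ω) j ^ 2 ∂μ ≤ σ ^ 2 * (Fintype.card ι * c) := by
  rw [integral_sum_mulVec_sq Xᵀ hint hcov]
  exact mul_le_mul_of_nonneg_left (sum_sum_sq_le_of_eigenvalues_le X hH hc) (sq_nonneg σ)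

end Noise

section ElasticNet

variable {ι κ : Type*} [Fintype ι] [Fintype κ] [DecidableEq ι]

theorem penalizedLeastSquares_toLp (X : Matrix κ ι ℝ) (y : κ → ℝ) (ρ : ℝ)
    (g : EuclideanSpace ℝ ι → ℝ) (β : ι → ℝ) :
    penalizedLeastSquares (toEuclideanLin X) (WithLp.toLp 2 y) ρ g (WithLp.toLp 2 β) =
      ∑ i, (y i - (X *ᵥ β) i) ^ 2 + ρ * ∑ j, β j ^ 2 + g (WithLp.toLp 2 β) := by
  simp [penalizedLeastSquares, EuclideanSpace.real_norm_sq_eq]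

theorem penalizedLeastSquares_weightedL1_le_of_le {X : Matrix κ ι ℝ} {ρ l1 : ℝ}
    {x : ι → ℝ} {e : κ → ℝ} {w m : ι → ℝ}
    (hm : ∀ β : ι → ℝ,
      (∑ i, ((X *ᵥ x + e) i - (X *ᵥ m) i) ^ 2) + ρ * ∑ j, m j ^ 2 + l1 * ∑ j, w j * |m j| ≤
        (∑ i, ((X *ᵥ x + e) i - (X *ᵥ β) i) ^ 2) + ρ * ∑ j, β j ^ 2 + l1 * ∑ j, w j * |β j|)
    (β : EuclideanSpace ℝ ι) :
    penalizedLeastSquares (toEuclideanLin X)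
        (toEuclideanLin X (WithLp.toLp 2 x) + WithLp.toLp 2 e) ρ (l1 • weightedL1 w)
        (WithLp.toLp 2 m) ≤
      penalizedLeastSquares (toEuclideanLin X)
        (toEuclideanLin X (WithLp.toLp 2 x) + WithLp.toLp 2 e) ρ (l1 • weightedL1 w) β := by
  rw [← WithLp.toLp_ofLp 2 β, show toEuclideanLin X (WithLp.toLp 2 x) + WithLp.toLp 2 e =
    WithLp.toLp 2 (X *ᵥ x + e) from rfl, penalizedLeastSquares_toLp, penalizedLeastSquares_toLp]
  simpa [weightedL1] using hm (WithLp.ofLp β)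

theorem elasticNet_sq_error_le [DecidableEq κ] {X : Matrix κ ι ℝ} {K ρ l1 : ℝ}
    (hK : ∀ v, K * ‖v‖ ^ 2 ≤ ‖toEuclideanLin X v‖ ^ 2) (hρ : 0 ≤ ρ) (hKρ : 0 ≤ K + ρ)
    (hl1 : 0 ≤ l1) {x : ι → ℝ} {e : κ → ℝ} {w : ι → ℝ} (hw : ∀ j, 0 ≤ w j) {m : ι → ℝ}
    (hm : ∀ β : ι → ℝ,
      (∑ i, ((X *ᵥ x + e) i - (X *ᵥ m) i) ^ 2) + ρ * ∑ j, m j ^ 2 + l1 * ∑ j, w j * |m j| ≤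
        (∑ i, ((X *ᵥ x + e) i - (X *ᵥ β) i) ^ 2) + ρ * ∑ j, β j ^ 2 + l1 * ∑ j, w j * |β j|) :
    (K + ρ) ^ 2 * ∑ j, (m j - x j) ^ 2 ≤
      3 * (∑ j, (Xᵀ *ᵥ e) j ^ 2 + ρ ^ 2 * ∑ j, x j ^ 2 + l1 ^ 2 / 4 * ∑ j, w j ^ 2) := by
  have hG : ∀ u v, (l1 • weightedL1 w) u - (l1 • weightedL1 w) v ≤
      l1 * √(∑ j, w j ^ 2) * ‖u - v‖ := fun u v => by
    rw [Pi.smul_apply, Pi.smul_apply, smul_eq_mul, smul_eq_mul, ← mul_sub, mul_assoc]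
    exact mul_le_mul_of_nonneg_left (weightedL1_sub_le hw u v) hl1
  have h := sq_mul_sq_le_of_mul_sq_le hKρ (norm_nonneg _)
    (mul_norm_sub_sq_le_of_minimizer hK hρ ((convexOn_weightedL1 hw).smul hl1) hG
      (penalizedLeastSquares_weightedL1_le_of_le hm))
  have hnorm : ∀ v : ι → ℝ, ‖WithLp.toLp 2 v‖ ^ 2 = ∑ j, v j ^ 2 := fun v => by
    simp [EuclideanSpace.real_norm_sq_eq]
  rw [← toEuclideanLin_conjTranspose_eq_adjoint, conjTranspose_eq_transpose_of_trivial,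
    ← WithLp.toLp_sub, hnorm] at h
  refine h.trans ((add_add_sq_le_three_mul _ _ _).trans_eq ?_)
  have hadj : ‖toEuclideanLin Xᵀ (WithLp.toLp 2 e)‖ ^ 2 = ∑ j, (Xᵀ *ᵥ e) j ^ 2 := hnorm _
  rw [hadj, mul_pow, hnorm, div_pow, mul_pow, Real.sq_sqrt (by positivity)]
  ring

end ElasticNet

theorem stmt_7_general {n p : ℕ} (hn : 0 < n)
    {Ω : Type*} [MeasureSpace Ω] (μ : Measure Ω) [IsProbabilityMeasure μ]
    (X : Matrix (Fin n) (Fin p) ℝ) (hH : (Xᵀ * X).IsHermitian)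
    (b B : ℝ) (hb : 0 < b)
    (heigLB : ∀ i, b * n ≤ hH.eigenvalues i)
    (heigUB : ∀ i, hH.eigenvalues i ≤ B * n)
    (l2 l1 : ℝ) (hl2 : 0 ≤ l2) (hl1 : 0 ≤ l1)
    (bstar : Fin p → ℝ) (σ : ℝ)
    (eps : Ω → Fin n → ℝ)
    (hint2 : ∀ i j, Integrable (fun ω => eps ω i * eps ω j) μ)
    (hcov : ∀ i j, ∫ ω, eps ω i * eps ω j ∂μ = if i = j then σ ^ 2 else 0)
    (w : Ω → Fin p → ℝ) (hw : ∀ ω j, 0 ≤ w ω j)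
    (bw : Ω → Fin p → ℝ)
    (hbw : ∀ ω, ∀ β : Fin p → ℝ,
      (∑ i, ((X.mulVec bstar + eps ω) i - X.mulVec (bw ω) i) ^ 2)
          + l2 * ∑ j, (bw ω j) ^ 2 + l1 * ∑ j, w ω j * |bw ω j| ≤
        (∑ i, ((X.mulVec bstar + eps ω) i - X.mulVec β i) ^ 2)
          + l2 * ∑ j, (β j) ^ 2 + l1 * ∑ j, w ω j * |β j|)
    (hintmse : Integrable (fun ω => ∑ j, (bw ω j - bstar j) ^ 2) μ)
    (hintw : Integrable (fun ω => ∑ j, (w ω j) ^ 2) μ) :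
    ∫ ω, ∑ j, (bw ω j - bstar j) ^ 2 ∂μ ≤
      4 * (l2 ^ 2 * ∑ j, (bstar j) ^ 2 + B * p * n * σ ^ 2
            + l1 ^ 2 * ∫ ω, ∑ j, (w ω j) ^ 2 ∂μ) / (b * n + l2) ^ 2 := by
  have hK : 0 < b * n := mul_pos hb (Nat.cast_pos.mpr hn)
  have hpointwise : ∀ ω, ∑ j, (bw ω j - bstar j) ^ 2 ≤
      3 * (∑ j, (Xᵀ *ᵥ eps ω) j ^ 2 + l2 ^ 2 * ∑ j, bstar j ^ 2 + l1 ^ 2 / 4 * ∑ j, w ω j ^ 2)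
        / (b * n + l2) ^ 2 := fun ω => by
    rw [le_div_iff₀' (by positivity)]
    exact elasticNet_sq_error_le (mul_norm_sq_le_norm_toEuclideanLin_sq X hH heigLB) hl2
      (by positivity) hl1 (hw ω) (hbw ω)
  have hnoise_int := integrable_sum_mulVec_sq Xᵀ hint2
  have hnoise_le := integral_sum_transpose_mulVec_sq_le X hH heigUB hint2 hcov
  rw [Fintype.card_fin] at hnoise_le
  have hnoise_nonneg : 0 ≤ ∫ ω, ∑ j, (Xᵀ *ᵥ eps ω) j ^ 2 ∂μ :=
    integral_nonneg fun ω => by positivity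
  have hW : 0 ≤ ∫ ω, ∑ j, w ω j ^ 2 ∂μ := integral_nonneg fun ω => by positivity
  calc ∫ ω, ∑ j, (bw ω j - bstar j) ^ 2 ∂μ
      ≤ ∫ ω, 3 * (∑ j, (Xᵀ *ᵥ eps ω) j ^ 2 + l2 ^ 2 * ∑ j, bstar j ^ 2
          + l1 ^ 2 / 4 * ∑ j, w ω j ^ 2) / (b * n + l2) ^ 2 ∂μ :=
        integral_mono hintmse (by fun_prop) hpointwise
    _ = 3 * (∫ ω, ∑ j, (Xᵀ *ᵥ eps ω) j ^ 2 ∂μ + l2 ^ 2 * ∑ j, bstar j ^ 2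
          + l1 ^ 2 / 4 * ∫ ω, ∑ j, w ω j ^ 2 ∂μ) / (b * n + l2) ^ 2 := by
        rw [integral_div, integral_const_mul, integral_add (by fun_prop) (by fun_prop),
          integral_add hnoise_int (integrable_const _), integral_const, integral_const_mul]
        simp
    _ ≤ _ := by
        refine div_le_div_of_nonneg_right ?_ (sq_nonneg _)
        have hβ : 0 ≤ ∑ j, bstar j ^ 2 := by positivity
        nlinarith [mul_nonneg (sq_nonneg l2) hβ, mul_nonneg (sq_nonneg l1) hW]

/-- Theorem 3.1 (nonasymptotic risk bound for the weighted elastic-net).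
In the linear model `y = Xβ* + ε` with `E ε = 0`, `Cov ε = σ² I`, and
`bn ≤ λ_min(XᵀX) ≤ λ_max(XᵀX) ≤ Bn`, the weighted elastic-net estimator satisfies
`E‖β̂w - β*‖₂² ≤ 4 (λ₂²‖β*‖₂² + Bpnσ² + λ₁² E[∑ ŵ_j²]) / (bn + λ₂)²`. -/
theorem stmt_7 {n p : ℕ} (hn : 0 < n) (hp : 0 < p)
    {Ω : Type*} [MeasureSpace Ω] (μ : Measure Ω) [IsProbabilityMeasure μ]
    (X : Matrix (Fin n) (Fin p) ℝ) (hH : (Xᵀ * X).IsHermitian)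
    (b B : ℝ) (hb : 0 < b) (hbB : b ≤ B)
    (heigLB : ∀ i, b * n ≤ hH.eigenvalues i)
    (heigUB : ∀ i, hH.eigenvalues i ≤ B * n)
    (l2 l1 : ℝ) (hl2 : 0 ≤ l2) (hl1 : 0 ≤ l1)
    (bstar : Fin p → ℝ) (σ : ℝ)
    (eps : Ω → Fin n → ℝ)
    (hint1 : ∀ i, Integrable (fun ω => eps ω i) μ)
    (hint2 : ∀ i j, Integrable (fun ω => eps ω i * eps ω j) μ)
    (hmean : ∀ i, ∫ ω, eps ω i ∂μ = 0)
    (hcov : ∀ i j, ∫ ω, eps ω i * eps ω j ∂μ = if i = j then σ ^ 2 else 0)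
    (w : Ω → Fin p → ℝ) (hw : ∀ ω j, 0 ≤ w ω j)
    (bw : Ω → Fin p → ℝ)
    (hbw : ∀ ω, ∀ β : Fin p → ℝ,
      (∑ i, ((X.mulVec bstar + eps ω) i - X.mulVec (bw ω) i) ^ 2)
          + l2 * ∑ j, (bw ω j) ^ 2 + l1 * ∑ j, w ω j * |bw ω j| ≤
        (∑ i, ((X.mulVec bstar + eps ω) i - X.mulVec β i) ^ 2)
          + l2 * ∑ j, (β j) ^ 2 + l1 * ∑ j, w ω j * |β j|)
    (hintmse : Integrable (fun ω => ∑ j, (bw ω j - bstar j) ^ 2) μ)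
    (hintw : Integrable (fun ω => ∑ j, (w ω j) ^ 2) μ) :
    ∫ ω, ∑ j, (bw ω j - bstar j) ^ 2 ∂μ ≤
      4 * (l2 ^ 2 * ∑ j, (bstar j) ^ 2 + B * p * n * σ ^ 2
            + l1 ^ 2 * ∫ ω, ∑ j, (w ω j) ^ 2 ∂μ) / (b * n + l2) ^ 2 :=
  stmt_7_general hn μ X hH b B hb heigLB heigUB l2 l1 hl2 hl1 bstar σ eps hint2 hcov w hw bw hbw
    hintmse hintw
end

section
/- (Theorem 3.1, special case) Under the same linear model and eigenvalue assumptions, the (unweighted) elastic-net estimator β̂(λ₂, λ₁) = argmin ‖y - Xβ‖₂² + λ₂‖β‖₂² + λ₁‖β‖₁ satisfies E‖β̂(λ₂, λ₁) - β*‖₂² ≤ 4(λ₂²‖β*‖₂² + Bpnσ² + λ₁²p)/(bn + λ₂)². -/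
/-!
The elastic-net objective is a quadratic with Hessian `2 (XᵀX + λ₂ I) ⪰ 2 (bn + λ₂) I` plus the
convex penalty `λ₁‖·‖₁`. Comparing its minimizer `β̂` with `β*` along the segment between them
gives, for `u = β̂ - β*`, the basic inequality
`2 (bn + λ₂) ‖u‖² ≤ 2 ⟪Xᵀε, u⟫ - 2 λ₂ ⟪β*, u⟫ + λ₁ (‖β*‖₁ - ‖β̂‖₁)`,
and coordinatewise AM-GM turns it into `(bn + λ₂)² ‖u‖² ≤ 4 (λ₂² ‖β*‖² + ‖Xᵀε‖² + λ₁² p)`.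
Taking expectations, `E ‖Xᵀε‖² = σ² tr (XᵀX) ≤ σ² p B n`.
-/

open Matrix MeasureTheory Finset Filter Topology

theorem Matrix.IsHermitian.mul_dotProduct_self_le {m : Type*} [Fintype m] [DecidableEq m]
    {A : Matrix m m ℝ} (hA : A.IsHermitian) {c : ℝ} (hc : ∀ i, c ≤ hA.eigenvalues i)
    (x : m → ℝ) : c * (x ⬝ᵥ x) ≤ x ⬝ᵥ A *ᵥ x := by
  set U : Matrix m m ℝ := (hA.eigenvectorUnitary : Matrix m m ℝ)
  have hU : U * Uᵀ = 1 := by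
    simpa [star_eq_conjTranspose] using mem_unitaryGroup_iff.mp hA.eigenvectorUnitary.2
  set w := Uᵀ *ᵥ x
  have hnorm : x ⬝ᵥ x = w ⬝ᵥ w := by
    rw [dotProduct_mulVec, vecMul_transpose, mulVec_mulVec, hU, one_mulVec]
  have hquad : x ⬝ᵥ A *ᵥ x = ∑ i, hA.eigenvalues i * w i ^ 2 := by
    conv_lhs => rw [hA.spectral_theorem, Unitary.conjStarAlgAut_apply]
    rw [star_eq_conjTranspose, conjTranspose_eq_transpose_of_trivial, ← mulVec_mulVec,
      ← mulVec_mulVec, dotProduct_mulVec, ← mulVec_transpose]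
    simp only [dotProduct, mulVec_diagonal, Function.comp_apply, RCLike.ofReal_real_eq_id, id]
    exact sum_congr rfl fun i _ => by ring
  rw [hnorm, hquad, dotProduct, mul_sum]
  exact sum_le_sum fun i _ => by nlinarith [mul_self_nonneg (w i), hc i]

theorem le_sub_of_forall_le_of_segment_le {E : Type*} [AddCommGroup E] [Module ℝ E]
    {f : E → ℝ} {x y : E} {K : ℝ} (hx : ∀ z, f x ≤ f z)
    (hf : ∀ t ∈ Set.Ioc (0 : ℝ) 1,
      f (x + t • (y - x)) ≤ (1 - t) * f x + t * f y - t * (1 - t) * K) :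
    K ≤ f y - f x := by
  have hlim : Tendsto (fun t : ℝ => (1 - t) * K) (𝓝[>] 0) (𝓝 K) := by
    have : Continuous fun t : ℝ => (1 - t) * K := by fun_prop
    simpa using (this.tendsto 0).mono_left nhdsWithin_le_nhds
  refine le_of_tendsto hlim ?_
  filter_upwards [Ioc_mem_nhdsGT one_pos] with t ht
  have := (hx _).trans (hf t ht)
  have : t * ((1 - t) * K) ≤ t * (f y - f x) := by linarith
  exact le_of_mul_le_mul_left this ht.1

theorem sum_sq_add_mul_sub {ι : Type*} [Fintype ι] (a c : ι → ℝ) (t : ℝ) :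
    ∑ i, (a i + t * (c i - a i)) ^ 2 =
      (1 - t) * ∑ i, a i ^ 2 + t * ∑ i, c i ^ 2 - t * (1 - t) * ∑ i, (c i - a i) ^ 2 := by
  simp only [mul_sum, ← sum_add_distrib, ← sum_sub_distrib]
  exact sum_congr rfl fun i _ => by ring

theorem two_mul_sub_add_abs_sub_le {D : ℝ} (hD : 0 < D) (l2 : ℝ) {l1 : ℝ} (hl1 : 0 ≤ l1)
    (v b u : ℝ) :
    2 * v * u - 2 * l2 * b * u + l1 * (|b| - |b + u|) ≤
      4 * (v ^ 2 + l2 ^ 2 * b ^ 2 + l1 ^ 2) / D + D * u ^ 2 := by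
  have habs : |b| - |b + u| ≤ |u| := by
    simpa using abs_sub_abs_le_abs_sub b (b + u)
  have hamgm : 2 * v * u - 2 * l2 * b * u + l1 * |u| ≤
      4 * (v ^ 2 + l2 ^ 2 * b ^ 2 + l1 ^ 2) / D + D * u ^ 2 := by
    -- `2vu ≤ 4v²/D + Du²/4`, `-2λbu ≤ 4λ²b²/D + Du²/4` and `λ₁|u| ≤ λ₁²/D + Du²/4`
    rw [div_add' _ _ _ hD.ne', le_div_iff₀ hD]
    nlinarith [sq_nonneg (2 * v - D * u / 2), sq_nonneg (2 * l2 * b + D * u / 2),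
      sq_nonneg (l1 - D * |u| / 2), congrArg (D ^ 2 * ·) (sq_abs u), sq_nonneg l1]
  nlinarith [mul_le_mul_of_nonneg_left habs hl1]

section ElasticNet

variable {m k : Type*} [Fintype m] [Fintype k]

def elasticNetLoss (X : Matrix m k ℝ) (y : m → ℝ) (l2 l1 : ℝ) (β : k → ℝ) : ℝ :=
  ∑ i, (y i - (X *ᵥ β) i) ^ 2 + l2 * ∑ j, β j ^ 2 + l1 * ∑ j, |β j|

variable {X : Matrix m k ℝ} {y : m → ℝ} {l2 l1 : ℝ}

theorem elasticNetLoss_add_smul_sub_le (hl1 : 0 ≤ l1) (β β' : k → ℝ) {t : ℝ}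
    (ht₀ : 0 ≤ t) (ht₁ : t ≤ 1) :
    elasticNetLoss X y l2 l1 (β + t • (β' - β)) ≤
      (1 - t) * elasticNetLoss X y l2 l1 β + t * elasticNetLoss X y l2 l1 β' -
        t * (1 - t) * (∑ i, (X *ᵥ (β' - β)) i ^ 2 + l2 * ∑ j, (β' j - β j) ^ 2) := by
  have hres : ∑ i, (y i - (X *ᵥ (β + t • (β' - β))) i) ^ 2 =
      (1 - t) * ∑ i, (y i - (X *ᵥ β) i) ^ 2 + t * ∑ i, (y i - (X *ᵥ β') i) ^ 2 -
        t * (1 - t) * ∑ i, (X *ᵥ (β' - β)) i ^ 2 := by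
    simp only [mulVec_add, mulVec_smul, mulVec_sub, Pi.add_apply, Pi.smul_apply, Pi.sub_apply,
      smul_eq_mul, mul_sum, ← sum_add_distrib, ← sum_sub_distrib]
    exact sum_congr rfl fun i _ => by ring
  have hridge : ∑ j, (β + t • (β' - β)) j ^ 2 =
      (1 - t) * ∑ j, β j ^ 2 + t * ∑ j, β' j ^ 2 - t * (1 - t) * ∑ j, (β' j - β j) ^ 2 :=
    sum_sq_add_mul_sub β β' t
  have hlasso : ∑ j, |(β + t • (β' - β)) j| ≤ (1 - t) * ∑ j, |β j| + t * ∑ j, |β' j| := by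
    rw [mul_sum, mul_sum, ← sum_add_distrib]
    refine sum_le_sum fun j _ => ?_
    calc |(β + t • (β' - β)) j| = |(1 - t) * β j + t * β' j| := by
          simp only [Pi.add_apply, Pi.smul_apply, Pi.sub_apply, smul_eq_mul]
          congr 1; ring
      _ ≤ |(1 - t) * β j| + |t * β' j| := abs_add_le _ _
      _ = (1 - t) * |β j| + t * |β' j| := by
          rw [abs_mul, abs_mul, abs_of_nonneg (sub_nonneg.2 ht₁), abs_of_nonneg ht₀]
  unfold elasticNetLoss
  rw [hres, hridge]
  nlinarith [mul_le_mul_of_nonneg_left hlasso hl1]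

theorem elasticNetLoss_quadratic_growth (hl1 : 0 ≤ l1) {βhat : k → ℝ}
    (hmin : ∀ β, elasticNetLoss X y l2 l1 βhat ≤ elasticNetLoss X y l2 l1 β) (β : k → ℝ) :
    ∑ i, (X *ᵥ (β - βhat)) i ^ 2 + l2 * ∑ j, (β j - βhat j) ^ 2 ≤
      elasticNetLoss X y l2 l1 β - elasticNetLoss X y l2 l1 βhat :=
  le_sub_of_forall_le_of_segment_le hmin fun _ ht =>
    elasticNetLoss_add_smul_sub_le hl1 βhat β ht.1.le ht.2

theorem elasticNet_basic_inequality {c : ℝ}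
    (hX : ∀ u, c * ∑ j, u j ^ 2 ≤ ∑ i, (X *ᵥ u) i ^ 2) (hl1 : 0 ≤ l1) {βstar u : k → ℝ}
    {e : m → ℝ} (hmin : ∀ β, elasticNetLoss X (X *ᵥ βstar + e) l2 l1 (βstar + u) ≤
      elasticNetLoss X (X *ᵥ βstar + e) l2 l1 β) :
    2 * (c + l2) * ∑ j, u j ^ 2 ≤ ∑ j, (2 * (Xᵀ *ᵥ e) j * u j - 2 * l2 * βstar j * u j +
      l1 * (|βstar j| - |βstar j + u j|)) := by
  have hgrowth := elasticNetLoss_quadratic_growth hl1 hmin βstar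
  have hcross : ∑ i, e i * (X *ᵥ u) i = ∑ j, (Xᵀ *ᵥ e) j * u j := by
    change e ⬝ᵥ X *ᵥ u = (Xᵀ *ᵥ e) ⬝ᵥ u
    rw [dotProduct_mulVec, ← mulVec_transpose]
  have hres : ∑ i, ((X *ᵥ βstar) i + e i - (X *ᵥ (βstar + u)) i) ^ 2 =
      ∑ i, e i ^ 2 - 2 * ∑ i, e i * (X *ᵥ u) i + ∑ i, (X *ᵥ u) i ^ 2 := by
    simp only [mulVec_add, Pi.add_apply, mul_sum, ← sum_add_distrib, ← sum_sub_distrib]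
    exact sum_congr rfl fun i _ => by ring
  have hridge : ∑ j, (βstar j + u j) ^ 2 =
      ∑ j, βstar j ^ 2 + 2 * ∑ j, βstar j * u j + ∑ j, u j ^ 2 := by
    simp only [mul_sum, ← sum_add_distrib]
    exact sum_congr rfl fun j _ => by ring
  have hsplit : ∑ j, (2 * (Xᵀ *ᵥ e) j * u j - 2 * l2 * βstar j * u j +
        l1 * (|βstar j| - |βstar j + u j|)) =
      2 * ∑ j, (Xᵀ *ᵥ e) j * u j - 2 * l2 * ∑ j, βstar j * u j +
        l1 * (∑ j, |βstar j| - ∑ j, |βstar j + u j|) := by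
    simp only [mul_sum, ← sum_sub_distrib, ← sum_add_distrib]
    exact sum_congr rfl fun j _ => by ring
  unfold elasticNetLoss at hgrowth
  simp only [sub_add_cancel_left, mulVec_neg, Pi.neg_apply, neg_sq, Pi.add_apply,
    add_sub_cancel_left] at hgrowth
  rw [hres, hridge] at hgrowth
  rw [hsplit, ← hcross]
  linarith [hX u]

theorem elasticNet_sq_error_le_s8 {c : ℝ} (hX : ∀ u, c * ∑ j, u j ^ 2 ≤ ∑ i, (X *ᵥ u) i ^ 2)
    (hD : 0 < c + l2) (hl1 : 0 ≤ l1) {βstar βhat : k → ℝ} {e : m → ℝ}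
    (hmin : ∀ β, elasticNetLoss X (X *ᵥ βstar + e) l2 l1 βhat ≤
      elasticNetLoss X (X *ᵥ βstar + e) l2 l1 β) :
    ∑ j, (βhat j - βstar j) ^ 2 ≤
      4 * (l2 ^ 2 * ∑ j, βstar j ^ 2 + ∑ j, (Xᵀ *ᵥ e) j ^ 2 + l1 ^ 2 * Fintype.card k) /
        (c + l2) ^ 2 := by
  obtain ⟨u, rfl⟩ : ∃ u, βhat = βstar + u := ⟨βhat - βstar, by abel⟩
  have hbasic := elasticNet_basic_inequality hX hl1 hmin
  have hamgm := sum_le_sum fun j (_ : j ∈ univ) =>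
    two_mul_sub_add_abs_sub_le hD l2 hl1 ((Xᵀ *ᵥ e) j) (βstar j) (u j)
  have hrhs : ∑ j, (4 * ((Xᵀ *ᵥ e) j ^ 2 + l2 ^ 2 * βstar j ^ 2 + l1 ^ 2) / (c + l2) +
        (c + l2) * u j ^ 2) =
      4 * (l2 ^ 2 * ∑ j, βstar j ^ 2 + ∑ j, (Xᵀ *ᵥ e) j ^ 2 + l1 ^ 2 * Fintype.card k) /
        (c + l2) + (c + l2) * ∑ j, u j ^ 2 := by
    simp only [sum_add_distrib, ← sum_div, ← mul_sum, sum_const, card_univ, nsmul_eq_mul]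
    ring
  have hDS : (c + l2) * ∑ j, u j ^ 2 ≤
      4 * (l2 ^ 2 * ∑ j, βstar j ^ 2 + ∑ j, (Xᵀ *ᵥ e) j ^ 2 + l1 ^ 2 * Fintype.card k) /
        (c + l2) := by
    linarith [(hbasic.trans hamgm).trans_eq hrhs]
  rw [le_div_iff₀ hD] at hDS
  simp only [Pi.add_apply, add_sub_cancel_left]
  rw [le_div_iff₀ (by positivity)]
  linarith

end ElasticNet

section Covariance

theorem sq_mulVec_apply {κ m : Type*} [Fintype m] (A : Matrix κ m ℝ) (x : m → ℝ) (k : κ) :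
    (A *ᵥ x) k ^ 2 = ∑ i, ∑ j, A k i * A k j * (x i * x j) := by
  rw [sq, mulVec, dotProduct, sum_mul_sum]
  exact sum_congr rfl fun i _ => sum_congr rfl fun j _ => by ring

variable {Ω : Type*} [MeasurableSpace Ω] {μ : Measure Ω} {κ m : Type*} [Fintype κ] [Fintype m]

theorem integrable_sum_sq_mulVec (A : Matrix κ m ℝ) {e : Ω → m → ℝ}
    (hint : ∀ i j, Integrable (fun ω => e ω i * e ω j) μ) :
    Integrable (fun ω => ∑ k, (A *ᵥ e ω) k ^ 2) μ := by
  simp_rw [sq_mulVec_apply]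
  exact integrable_finsetSum _ fun k _ => integrable_finsetSum _ fun i _ =>
    integrable_finsetSum _ fun j _ => (hint i j).const_mul _

theorem integral_sum_sq_mulVec [DecidableEq m] (A : Matrix κ m ℝ) {e : Ω → m → ℝ} {σ : ℝ}
    (hint : ∀ i j, Integrable (fun ω => e ω i * e ω j) μ)
    (hcov : ∀ i j, ∫ ω, e ω i * e ω j ∂μ = if i = j then σ ^ 2 else 0) :
    ∫ ω, ∑ k, (A *ᵥ e ω) k ^ 2 ∂μ = σ ^ 2 * (A * Aᵀ).trace := by
  simp_rw [sq_mulVec_apply]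
  rw [integral_finsetSum _ fun k _ => integrable_finsetSum _ fun i _ =>
    integrable_finsetSum _ fun j _ => (hint i j).const_mul _]
  simp_rw [integral_finsetSum _ fun i _ => integrable_finsetSum _ fun j _ =>
    (hint i j).const_mul _, integral_finsetSum _ fun j _ => (hint _ j).const_mul _,
    integral_const_mul, hcov]
  simp [trace, mul_apply, mul_sum, mul_comm]

end Covariance

theorem stmt_8_general {n p : ℕ} (hn : 0 < n)
    {Ω : Type*} [MeasureSpace Ω] (μ : Measure Ω) [IsProbabilityMeasure μ]
    (X : Matrix (Fin n) (Fin p) ℝ) (hH : (Xᵀ * X).IsHermitian)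
    (b B : ℝ) (hb : 0 < b)
    (heigLB : ∀ i, b * n ≤ hH.eigenvalues i)
    (heigUB : ∀ i, hH.eigenvalues i ≤ B * n)
    (l2 l1 : ℝ) (hl2 : 0 ≤ l2) (hl1 : 0 ≤ l1)
    (bstar : Fin p → ℝ) (σ : ℝ)
    (eps : Ω → Fin n → ℝ)
    (hint2 : ∀ i j, Integrable (fun ω => eps ω i * eps ω j) μ)
    (hcov : ∀ i j, ∫ ω, eps ω i * eps ω j ∂μ = if i = j then σ ^ 2 else 0)
    (bhat : Ω → Fin p → ℝ)
    (hbhat : ∀ ω, ∀ β : Fin p → ℝ,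
      (∑ i, ((X.mulVec bstar + eps ω) i - X.mulVec (bhat ω) i) ^ 2)
          + l2 * ∑ j, (bhat ω j) ^ 2 + l1 * ∑ j, |bhat ω j| ≤
        (∑ i, ((X.mulVec bstar + eps ω) i - X.mulVec β i) ^ 2)
          + l2 * ∑ j, (β j) ^ 2 + l1 * ∑ j, |β j|) :
    ∫ ω, ∑ j, (bhat ω j - bstar j) ^ 2 ∂μ ≤
      4 * (l2 ^ 2 * ∑ j, (bstar j) ^ 2 + B * p * n * σ ^ 2 + l1 ^ 2 * p)
        / (b * n + l2) ^ 2 := by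
  have hD : 0 < b * n + l2 := by positivity
  have hX : ∀ u, b * n * ∑ j, u j ^ 2 ≤ ∑ i, (X *ᵥ u) i ^ 2 := fun u => by
    have h := hH.mul_dotProduct_self_le heigLB u
    rw [← mulVec_mulVec, dotProduct_mulVec, vecMul_transpose] at h
    simpa only [dotProduct, sq] using h
  have htrace : (Xᵀ * X).trace ≤ p * (B * n) := by
    simpa [hH.trace_eq_sum_eigenvalues] using sum_le_sum fun i (_ : i ∈ univ) => heigUB i
  have hbound := fun ω => elasticNet_sq_error_le_s8 hX hD hl1 (hbhat ω)
  have hnoise := integrable_sum_sq_mulVec Xᵀ hint2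
  have hint : Integrable (fun ω => l2 ^ 2 * ∑ j, bstar j ^ 2 + ∑ j, (Xᵀ *ᵥ eps ω) j ^ 2) μ :=
    (integrable_const _).add hnoise
  calc ∫ ω, ∑ j, (bhat ω j - bstar j) ^ 2 ∂μ
      ≤ ∫ ω, 4 * (l2 ^ 2 * ∑ j, bstar j ^ 2 + ∑ j, (Xᵀ *ᵥ eps ω) j ^ 2 + l1 ^ 2 * p) /
          (b * n + l2) ^ 2 ∂μ := by
        refine integral_mono_of_nonneg (ae_of_all _ fun ω => by positivity) ?_
          (ae_of_all _ fun ω => by simpa using hbound ω)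
        exact ((hint.add (integrable_const _)).const_mul 4).div_const _
    _ = 4 * (l2 ^ 2 * ∑ j, bstar j ^ 2 + σ ^ 2 * (Xᵀ * X).trace + l1 ^ 2 * p) /
          (b * n + l2) ^ 2 := by
        rw [integral_div, integral_const_mul, integral_add hint (integrable_const _),
          integral_add (integrable_const _) hnoise, integral_const, integral_const,
          integral_sum_sq_mulVec Xᵀ hint2 hcov, transpose_transpose]
        simp
    _ ≤ _ := by
        gcongr 4 * (_ + ?_ + _) / _
        nlinarith [mul_le_mul_of_nonneg_left htrace (sq_nonneg σ)]

/-- Theorem 3.1, special case: the (unweighted) elastic-net estimator satisfies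
`E‖β̂(λ₂,λ₁) - β*‖₂² ≤ 4 (λ₂²‖β*‖₂² + Bpnσ² + λ₁² p) / (bn + λ₂)²`. -/
theorem stmt_8 {n p : ℕ} (hn : 0 < n) (hp : 0 < p)
    {Ω : Type*} [MeasureSpace Ω] (μ : Measure Ω) [IsProbabilityMeasure μ]
    (X : Matrix (Fin n) (Fin p) ℝ) (hH : (Xᵀ * X).IsHermitian)
    (b B : ℝ) (hb : 0 < b) (hbB : b ≤ B)
    (heigLB : ∀ i, b * n ≤ hH.eigenvalues i)
    (heigUB : ∀ i, hH.eigenvalues i ≤ B * n)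
    (l2 l1 : ℝ) (hl2 : 0 ≤ l2) (hl1 : 0 ≤ l1)
    (bstar : Fin p → ℝ) (σ : ℝ)
    (eps : Ω → Fin n → ℝ)
    (hint1 : ∀ i, Integrable (fun ω => eps ω i) μ)
    (hint2 : ∀ i j, Integrable (fun ω => eps ω i * eps ω j) μ)
    (hmean : ∀ i, ∫ ω, eps ω i ∂μ = 0)
    (hcov : ∀ i j, ∫ ω, eps ω i * eps ω j ∂μ = if i = j then σ ^ 2 else 0)
    (bhat : Ω → Fin p → ℝ)
    (hbhat : ∀ ω, ∀ β : Fin p → ℝ,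
      (∑ i, ((X.mulVec bstar + eps ω) i - X.mulVec (bhat ω) i) ^ 2)
          + l2 * ∑ j, (bhat ω j) ^ 2 + l1 * ∑ j, |bhat ω j| ≤
        (∑ i, ((X.mulVec bstar + eps ω) i - X.mulVec β i) ^ 2)
          + l2 * ∑ j, (β j) ^ 2 + l1 * ∑ j, |β j|)
    (hintmse : Integrable (fun ω => ∑ j, (bhat ω j - bstar j) ^ 2) μ) :
    ∫ ω, ∑ j, (bhat ω j - bstar j) ^ 2 ∂μ ≤
      4 * (l2 ^ 2 * ∑ j, (bstar j) ^ 2 + B * p * n * σ ^ 2 + l1 ^ 2 * p)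
        / (b * n + l2) ^ 2 :=
  stmt_8_general hn μ X hH b B hb heigLB heigUB l2 l1 hl2 hl1 bstar σ eps hint2 hcov bhat hbhat
end
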